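/- Positivity of the population-imputation gap (part of the proof of Theorem 3): under the assumptions Var(X | {O=0} ∩ G) = Var(X | {O=0} ∩ Gᶜ) and μ_g^O > μ^O, the population-imputation reconstruction gap is positive, Δ^{pop}_g > 0, if and only if either (E > R_E and H > R_H) or (E < R_E and H < R_H), where E = ρ_g·σ_{X|G}·e(α_g) − ρ_{¬g}·σ_{X|Gᶜ}·e(α_{¬g}), R_E = μ_g − μ_{¬g}, H = ρ_g·σ_{X|G}·h(α_g, r_g, α_{¬g}) + ρ_{¬g}·σ_{X|Gᶜ}·h(α_{¬g}, 1−r_g, α_g), and R_H = ((1−r_g)·α_{¬g} − r_g·α_g)·(μ_g − μ_{¬g}). -/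

import Mathlib

/-!
Inside a group with observation rate `α` and observed/unobserved means `m₁`, `m₀` of `X`, the
group mean is `α m₁ + (1 - α) m₀` and `Cov(O, X) = α (1 - α) (m₁ - m₀)`. Hence
`ρ σ e(α) = α (m₁ - m₀)` and `E - R_E = m₀(¬g) - m₀(g)`. With equal unobserved variances the
bias–variance decomposition of the two losses gives
`Δ = (m₀(¬g) - m₀(g)) (2 μ^O - m₀(g) - m₀(¬g))`, while the law of total expectation for `μ^O`
turns `H - R_H` into `P(O = 1) (2 μ^O - m₀(g) - m₀(¬g))`. So `P(O = 1) Δ = (E - R_E) (H - R_H)`,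
and the claim is the sign rule for a product.
-/

open MeasureTheory ProbabilityTheory

/-- Covariance of two real random variables under the measure `μ`. -/
noncomputable def condCov {Ω : Type*} [MeasurableSpace Ω] (μ : Measure Ω) (O X : Ω → ℝ) : ℝ :=
  ∫ ω, (O ω - ∫ x, O x ∂μ) * (X ω - ∫ x, X x ∂μ) ∂μ

section Indicator

variable {Ω : Type*}

lemma eq_indicator_preimage_one {O : Ω → ℝ} (hO : ∀ ω, O ω = 0 ∨ O ω = 1) :
    O = (O ⁻¹' {1}).indicator 1 := by
  ext ω
  rcases hO ω with h | h <;> simp [h]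

lemma indicator_one_preimage_one (A : Set Ω) : A.indicator (1 : Ω → ℝ) ⁻¹' {1} = A := by
  ext ω
  by_cases h : ω ∈ A <;> simp [h]

lemma indicator_one_preimage_zero (A : Set Ω) : A.indicator (1 : Ω → ℝ) ⁻¹' {0} = Aᶜ := by
  ext ω
  by_cases h : ω ∈ A <;> simp [h]

end Indicator

section Conditioning

variable {Ω : Type*} [MeasurableSpace Ω] {μ : Measure Ω}

lemma MeasureTheory.MemLp.cond {X : Ω → ℝ} {p : ENNReal} (hX : MemLp X p μ) {s : Set Ω}
    (hs : μ s ≠ 0) : MemLp X p μ[|s] :=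
  (hX.restrict s).smul_measure (ENNReal.inv_ne_top.mpr hs)

variable [IsFiniteMeasure μ]

lemma measureReal_mul_integral_cond (s : Set Ω) (f : Ω → ℝ) :
    μ.real s * ∫ x, f x ∂μ[|s] = ∫ x in s, f x ∂μ := by
  rcases eq_or_ne (μ s) 0 with hs | hs
  · simp [Measure.restrict_eq_zero.mpr hs, measureReal_def, hs]
  · rw [ProbabilityTheory.cond, integral_smul_measure, smul_eq_mul, ENNReal.toReal_inv,
      measureReal_def, ← mul_assoc,
      mul_inv_cancel₀ (ENNReal.toReal_ne_zero.mpr ⟨hs, measure_ne_top μ s⟩), one_mul]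

lemma measureReal_mul_integral_cond_eq_add {t : Set Ω} (ht : MeasurableSet t) {f : Ω → ℝ}
    (hf : Integrable f μ) (s : Set Ω) :
    μ.real s * ∫ x, f x ∂μ[|s] =
      μ.real (s ∩ t) * ∫ x, f x ∂μ[|s ∩ t] + μ.real (s ∩ tᶜ) * ∫ x, f x ∂μ[|s ∩ tᶜ] := by
  simp only [measureReal_mul_integral_cond]
  rw [← integral_add_compl ht hf.restrict, Measure.restrict_restrict ht,
    Measure.restrict_restrict ht.compl, Set.inter_comm t, Set.inter_comm tᶜ]

lemma measureReal_inter_eq_mul_cond {G : Set Ω} (hG : MeasurableSet G) (A : Set Ω) :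
    μ.real (A ∩ G) = μ.real G * μ[|G].real A := by
  rw [measureReal_def, measureReal_def, measureReal_def, ← ENNReal.toReal_mul, mul_comm,
    cond_mul_eq_inter hG, Set.inter_comm]

variable [IsProbabilityMeasure μ]

lemma integral_eq_add_integral_cond_compl {s : Set Ω} (hs : MeasurableSet s) {f : Ω → ℝ}
    (hf : Integrable f μ) :
    ∫ x, f x ∂μ = μ.real s * ∫ x, f x ∂μ[|s] + (1 - μ.real s) * ∫ x, f x ∂μ[|sᶜ] := by
  rw [measureReal_mul_integral_cond, ← probReal_compl_eq_one_sub hs,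
    measureReal_mul_integral_cond, integral_add_compl hs hf]

lemma covariance_indicator_one_left {s : Set Ω} (hs : MeasurableSet s) {X : Ω → ℝ}
    (hX : MemLp X 2 μ) :
    cov[s.indicator 1, X; μ] =
      μ.real s * (1 - μ.real s) * (∫ x, X x ∂μ[|s] - ∫ x, X x ∂μ[|sᶜ]) := by
  have hprod : s.indicator 1 * X = s.indicator X := by
    ext ω
    by_cases h : ω ∈ s <;> simp [h]
  have h1 := memLp_indicator_const 2 hs (1 : ℝ) (Or.inr (measure_ne_top μ s))
  rw [covariance_eq_sub (X := s.indicator 1) h1 hX, hprod, integral_indicator hs,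
    ← measureReal_mul_integral_cond, integral_indicator_one hs,
    integral_eq_add_integral_cond_compl hs (hX.integrable one_le_two)]
  ring

lemma integral_sub_sq_eq_variance_add {X : Ω → ℝ} (hX : MemLp X 2 μ) (c : ℝ) :
    ∫ x, (c - X x) ^ 2 ∂μ = Var[X; μ] + (c - ∫ x, X x ∂μ) ^ 2 := by
  have hXi : Integrable X μ := hX.integrable one_le_two
  have hX2i : Integrable (fun ω ↦ X ω ^ 2) μ := hX.integrable_sq
  have h1 : Integrable (fun ω ↦ X ω ^ 2 - 2 * c * X ω) μ := hX2i.sub (hXi.const_mul _)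
  simp_rw [show ∀ x, (c - X x) ^ 2 = X x ^ 2 - 2 * c * X x + c ^ 2 from fun x ↦ by ring]
  rw [integral_add h1 (integrable_const _),
    integral_sub hX2i (hXi.const_mul _), integral_const_mul, integral_const, variance_eq_sub hX]
  simp only [Pi.pow_apply, probReal_univ, smul_eq_mul, one_mul]
  ring

end Conditioning

section Subpopulation

variable {Ω : Type*} [MeasurableSpace Ω] {μ : Measure Ω} [IsFiniteMeasure μ]
  {A G : Set Ω} (hA : MeasurableSet A) (hG : MeasurableSet G) (hG0 : μ G ≠ 0)
  {X : Ω → ℝ} (hX : MemLp X 2 μ)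
include hA hG hG0 hX

lemma integral_cond_eq_add_integral_cond_inter :
    ∫ x, X x ∂μ[|G] = μ[|G].real A * ∫ x, X x ∂μ[|A ∩ G] +
      (1 - μ[|G].real A) * ∫ x, X x ∂μ[|Aᶜ ∩ G] := by
  have := cond_isProbabilityMeasure (μ := μ) hG0
  rw [integral_eq_add_integral_cond_compl hA ((hX.cond hG0).integrable one_le_two),
    cond_cond_eq_cond_inter hG hA, cond_cond_eq_cond_inter hG hA.compl, Set.inter_comm G,
    Set.inter_comm G]

lemma condCov_cond_indicator_one :
    condCov μ[|G] (A.indicator 1) X = μ[|G].real A * (1 - μ[|G].real A) *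
      (∫ x, X x ∂μ[|A ∩ G] - ∫ x, X x ∂μ[|Aᶜ ∩ G]) := by
  have := cond_isProbabilityMeasure (μ := μ) hG0
  rw [show condCov μ[|G] (A.indicator 1) X = cov[A.indicator 1, X; μ[|G]] from rfl,
    covariance_indicator_one_left hA (hX.cond hG0), cond_cond_eq_cond_inter hG hA,
    cond_cond_eq_cond_inter hG hA.compl, Set.inter_comm G, Set.inter_comm G]

end Subpopulation

section Algebra

lemma sqrt_div_eq_sqrt_mul_div (x : ℝ) {c : ℝ} (hc : 0 < c) : √(x / c) = √(x * c) / c := by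
  rw [show x / c = x * c / c ^ 2 by field_simp, Real.sqrt_div' _ (by positivity),
    Real.sqrt_sq hc.le]

-- `ρ σ e(a)` and `ρ σ h(a, r, b)` for a group whose covariance is `a (1 - a) d`.
variable {a σ : ℝ} (ha0 : 0 < a) (ha1 : a < 1) (hσ : σ ≠ 0)
include ha0 ha1 hσ

lemma corr_mul_sd_mul_sqrt_odds (d : ℝ) :
    a * (1 - a) * d / (√(a * (1 - a)) * σ) * σ * √(a / (1 - a)) = a * d := by
  have hq0 : 0 < √(a * (1 - a)) := Real.sqrt_pos.mpr (by nlinarith)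
  have h1a : 1 - a ≠ 0 := by linarith
  rw [sqrt_div_eq_sqrt_mul_div a (by linarith)]
  field_simp

lemma corr_mul_sd_mul_h (d r b : ℝ) :
    a * (1 - a) * d / (√(a * (1 - a)) * σ) * σ *
        ((a * r + b * (1 - r)) / √(a * (1 - a)) - √((1 - a) / a) * (b * (1 - r) - a * r)) =
      d * (a * r + b * (1 - r) - (1 - a) * (b * (1 - r) - a * r)) := by
  have hq : √(a * (1 - a)) ^ 2 = a * (1 - a) := Real.sq_sqrt (by nlinarith)
  have hq0 : 0 < √(a * (1 - a)) := Real.sqrt_pos.mpr (by nlinarith)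
  have h1a : 1 - a ≠ 0 := by linarith
  rw [sqrt_div_eq_sqrt_mul_div _ ha0, mul_comm (1 - a) a]
  field_simp
  linear_combination -d * (a * r + b * (1 - r)) * hq

end Algebra

lemma pos_iff_of_mul_eq_mul_sub {Δ π E RE H RH : ℝ} (hπ : 0 < π)
    (h : π * Δ = (E - RE) * (H - RH)) :
    0 < Δ ↔ (RE < E ∧ RH < H) ∨ (E < RE ∧ H < RH) := by
  rw [← mul_pos_iff_of_pos_left hπ, h, mul_pos_iff, sub_pos, sub_pos, sub_neg, sub_neg]

theorem population_gap_positive_general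
    {Ω : Type*} [MeasurableSpace Ω] (μ : Measure Ω) [IsProbabilityMeasure μ]
    (X O : Ω → ℝ) (G : Set Ω)
    (hOm : Measurable O) (hG : MeasurableSet G)
    (hX2 : MemLp X 2 μ)
    (hO01 : ∀ ω, O ω = 0 ∨ O ω = 1)
    (αg αng μg μng μO σXG σXnG ρg ρng rg
      LgPop LngPop ΔPop E RE H RH : ℝ)
    (e : ℝ → ℝ) (h : ℝ → ℝ → ℝ → ℝ)
    (hαg : αg = ∫ ω, O ω ∂(μ[|G]))
    (hαng : αng = ∫ ω, O ω ∂(μ[|Gᶜ]))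
    (hμg : μg = ∫ ω, X ω ∂(μ[|G]))
    (hμng : μng = ∫ ω, X ω ∂(μ[|Gᶜ]))
    (hμO : μO = ∫ ω, X ω ∂(μ[|O ⁻¹' {1}]))
    (hρg : ρg = condCov (μ[|G]) O X / (Real.sqrt (αg * (1 - αg)) * σXG))
    (hρng : ρng = condCov (μ[|Gᶜ]) O X / (Real.sqrt (αng * (1 - αng)) * σXnG))
    (hrg : rg = (μ G).toReal)
    (hLgPop : LgPop = ∫ ω, (μO - X ω) ^ 2 ∂(μ[|O ⁻¹' {0} ∩ G]))
    (hLngPop : LngPop = ∫ ω, (μO - X ω) ^ 2 ∂(μ[|O ⁻¹' {0} ∩ Gᶜ]))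
    (hΔPop : ΔPop = LgPop - LngPop)
    (he : ∀ a, e a = Real.sqrt (a / (1 - a)))
    (hh : ∀ a r b, h a r b =
      (a * r + b * (1 - r)) / Real.sqrt (a * (1 - a)) -
        Real.sqrt ((1 - a) / a) * (b * (1 - r) - a * r))
    (hE : E = ρg * σXG * e αg - ρng * σXnG * e αng)
    (hRE : RE = μg - μng)
    (hH : H = ρg * σXG * h αg rg αng + ρng * σXnG * h αng (1 - rg) αg)
    (hRH : RH = ((1 - rg) * αng - rg * αg) * (μg - μng))
    (hr0 : 0 < rg) (hr1 : rg < 1)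
    (hαg0 : 0 < αg) (hαg1 : αg < 1)
    (hαng0 : 0 < αng) (hαng1 : αng < 1)
    (hσpos : 0 < σXG) (hσnpos : 0 < σXnG)
    (hpos0g : 0 < μ (O ⁻¹' {0} ∩ G))
    (hpos0ng : 0 < μ (O ⁻¹' {0} ∩ Gᶜ))
    (hvar : variance X (μ[|O ⁻¹' {0} ∩ G]) = variance X (μ[|O ⁻¹' {0} ∩ Gᶜ])) :
    ΔPop > 0 ↔ (E > RE ∧ H > RH) ∨ (E < RE ∧ H < RH) := by
  obtain ⟨A, hA, rfl⟩ : ∃ A, MeasurableSet A ∧ O = A.indicator 1 :=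
    ⟨_, hOm (measurableSet_singleton 1), eq_indicator_preimage_one hO01⟩
  simp only [indicator_one_preimage_one, indicator_one_preimage_zero] at *
  rw [integral_indicator_one hA] at hαg hαng
  have hG0 : μ G ≠ 0 := (measure_pos_of_superset Set.inter_subset_right hpos0g.ne').ne'
  have hGc0 : μ Gᶜ ≠ 0 := (measure_pos_of_superset Set.inter_subset_right hpos0ng.ne').ne'
  have := cond_isProbabilityMeasure (μ := μ) hpos0g.ne'
  have := cond_isProbabilityMeasure (μ := μ) hpos0ng.ne'
  set m1g := ∫ x, X x ∂μ[|A ∩ G]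
  set m0g := ∫ x, X x ∂μ[|Aᶜ ∩ G]
  set m1n := ∫ x, X x ∂μ[|A ∩ Gᶜ]
  set m0n := ∫ x, X x ∂μ[|Aᶜ ∩ Gᶜ]
  have hμg' : μg = αg * m1g + (1 - αg) * m0g := by
    rw [hμg, hαg, integral_cond_eq_add_integral_cond_inter hA hG hG0 hX2]
  have hμng' : μng = αng * m1n + (1 - αng) * m0n := by
    rw [hμng, hαng, integral_cond_eq_add_integral_cond_inter hA hG.compl hGc0 hX2]
  have hcovg : condCov μ[|G] (A.indicator 1) X = αg * (1 - αg) * (m1g - m0g) := by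
    rw [hαg, condCov_cond_indicator_one hA hG hG0 hX2]
  have hcovn : condCov μ[|Gᶜ] (A.indicator 1) X = αng * (1 - αng) * (m1n - m0n) := by
    rw [hαng, condCov_cond_indicator_one hA hG.compl hGc0 hX2]
  have hμO' : (rg * αg + (1 - rg) * αng) * μO = rg * αg * m1g + (1 - rg) * αng * m1n := by
    rw [hμO, hrg, ← measureReal_def, ← probReal_compl_eq_one_sub hG, hαg, hαng,
      ← measureReal_inter_eq_mul_cond hG, ← measureReal_inter_eq_mul_cond hG.compl,
      show μ.real (A ∩ G) + μ.real (A ∩ Gᶜ) = μ.real A from measureReal_inter_add_sdiff hG,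
      measureReal_mul_integral_cond_eq_add hG (hX2.integrable one_le_two)]
  refine pos_iff_of_mul_eq_mul_sub (π := rg * αg + (1 - rg) * αng)
    (add_pos (mul_pos hr0 hαg0) (mul_pos (sub_pos.2 hr1) hαng0)) ?_
  rw [hΔPop, hLgPop, hLngPop, integral_sub_sq_eq_variance_add (hX2.cond hpos0g.ne'),
    integral_sub_sq_eq_variance_add (hX2.cond hpos0ng.ne'), hvar, hE, hH, hRE, hRH, hμg', hμng',
    hρg, hρng, hcovg, hcovn, he, he, hh, hh, corr_mul_sd_mul_sqrt_odds hαg0 hαg1 hσpos.ne',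
    corr_mul_sd_mul_sqrt_odds hαng0 hαng1 hσnpos.ne', corr_mul_sd_mul_h hαg0 hαg1 hσpos.ne',
    corr_mul_sd_mul_h hαng0 hαng1 hσnpos.ne']
  linear_combination 2 * (m0n - m0g) * hμO'

/-- (Part of the proof of Theorem 3.) Under equal unobserved-data variances
and `μ_g^O > μ^O`, the population-imputation gap `Δ^pop_g` is positive iff
`(E > R_E ∧ H > R_H) ∨ (E < R_E ∧ H < R_H)`. -/
theorem population_gap_positive
    {Ω : Type*} [MeasurableSpace Ω] (μ : Measure Ω) [IsProbabilityMeasure μ]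
    (X O : Ω → ℝ) (G : Set Ω)
    (hXm : Measurable X) (hOm : Measurable O) (hG : MeasurableSet G)
    (hX2 : MemLp X 2 μ)
    (hO01 : ∀ ω, O ω = 0 ∨ O ω = 1)
    (αg αng μg μng μgO μngO μO σXG σXnG ρg ρng rg
      LgPop LngPop ΔPop E RE H RH : ℝ)
    (e : ℝ → ℝ) (h : ℝ → ℝ → ℝ → ℝ)
    (hαg : αg = ∫ ω, O ω ∂(μ[|G]))
    (hαng : αng = ∫ ω, O ω ∂(μ[|Gᶜ]))
    (hμg : μg = ∫ ω, X ω ∂(μ[|G]))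
    (hμng : μng = ∫ ω, X ω ∂(μ[|Gᶜ]))
    (hμgO : μgO = ∫ ω, X ω ∂(μ[|O ⁻¹' {1} ∩ G]))
    (hμngO : μngO = ∫ ω, X ω ∂(μ[|O ⁻¹' {1} ∩ Gᶜ]))
    (hμO : μO = ∫ ω, X ω ∂(μ[|O ⁻¹' {1}]))
    (hσXG : σXG = Real.sqrt (variance X (μ[|G])))
    (hσXnG : σXnG = Real.sqrt (variance X (μ[|Gᶜ])))
    (hρg : ρg = condCov (μ[|G]) O X / (Real.sqrt (αg * (1 - αg)) * σXG))
    (hρng : ρng = condCov (μ[|Gᶜ]) O X / (Real.sqrt (αng * (1 - αng)) * σXnG))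
    (hrg : rg = (μ G).toReal)
    (hLgPop : LgPop = ∫ ω, (μO - X ω) ^ 2 ∂(μ[|O ⁻¹' {0} ∩ G]))
    (hLngPop : LngPop = ∫ ω, (μO - X ω) ^ 2 ∂(μ[|O ⁻¹' {0} ∩ Gᶜ]))
    (hΔPop : ΔPop = LgPop - LngPop)
    (he : ∀ a, e a = Real.sqrt (a / (1 - a)))
    (hh : ∀ a r b, h a r b =
      (a * r + b * (1 - r)) / Real.sqrt (a * (1 - a)) -
        Real.sqrt ((1 - a) / a) * (b * (1 - r) - a * r))
    (hE : E = ρg * σXG * e αg - ρng * σXnG * e αng)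
    (hRE : RE = μg - μng)
    (hH : H = ρg * σXG * h αg rg αng + ρng * σXnG * h αng (1 - rg) αg)
    (hRH : RH = ((1 - rg) * αng - rg * αg) * (μg - μng))
    (hr0 : 0 < rg) (hr1 : rg < 1)
    (hαg0 : 0 < αg) (hαg1 : αg < 1)
    (hαng0 : 0 < αng) (hαng1 : αng < 1)
    (hσpos : 0 < σXG) (hσnpos : 0 < σXnG)
    (hpos1g : 0 < μ (O ⁻¹' {1} ∩ G)) (hpos0g : 0 < μ (O ⁻¹' {0} ∩ G))
    (hpos1ng : 0 < μ (O ⁻¹' {1} ∩ Gᶜ)) (hpos0ng : 0 < μ (O ⁻¹' {0} ∩ Gᶜ))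
    (hvar : variance X (μ[|O ⁻¹' {0} ∩ G]) = variance X (μ[|O ⁻¹' {0} ∩ Gᶜ]))
    (hmean : μgO > μO) :
    ΔPop > 0 ↔ (E > RE ∧ H > RH) ∨ (E < RE ∧ H < RH) :=
  population_gap_positive_general μ X O G hOm hG hX2 hO01 αg αng μg μng μO σXG σXnG ρg ρng rg LgPop
    LngPop ΔPop E RE H RH e h hαg hαng hμg hμng hμO hρg hρng hrg hLgPop hLngPop hΔPop he hh hE hRE
    hH hRH hr0 hr1 hαg0 hαg1 hαng0 hαng1 hσpos hσnpos hpos0g hpos0ng hvar
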